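/- arXiv:1204.1608 — 4 statements merged into one kernel-verified Lean document; each statement's English description precedes it below -/
import Mathlib

section
/- With notation as in the Diophantine setup (α ∈ ℝⁿ∖{0}, |α| = |α₀|, F the smallest rational subspace of ℝⁿ containing α), for any Q, K > 0 and any point y in the polar convex body 𝒞(Q,K)* of 𝒞(Q,K) = {x ∈ F : |x| ≤ K, |x₀α − α₀x| ≤ Q⁻¹}, one has |y·α| ≤ |α|·K⁻¹; moreover, if additionally 2|α|QK ≥ 1, then |y| ≤ 2|α|Q. Hence 𝒞(Q,K)* ⊆ 𝒞'(2|α|Q, |α|⁻¹K), where 𝒞'(Q',K') = {x ∈ F : |x| ≤ Q', |x·α| ≤ K'⁻¹}. -/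
open Pointwise

/-- Dot product on `Fin n → ℝ` (the norm on `Fin n → ℝ` is the sup norm `|x| = max |x_i|`). -/
noncomputable def dotR {n : ℕ} (x y : Fin n → ℝ) : ℝ := ∑ i, x i * y i

/-- The convex body 𝒞(Q,K) = {x ∈ F : |x| ≤ K, |x₀α − α₀x| ≤ Q⁻¹}. -/
def bodyC {n : ℕ} [NeZero n] (F : Submodule ℝ (Fin n → ℝ)) (α : Fin n → ℝ) (Q K : ℝ) :
    Set (Fin n → ℝ) :=
  {x | x ∈ F ∧ ‖x‖ ≤ K ∧ ‖x 0 • α - α 0 • x‖ ≤ Q⁻¹}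

/-- The dual convex body 𝒞'(Q,K) = {x ∈ F : |x| ≤ Q, |x·α| ≤ K⁻¹}. -/
def bodyC' {n : ℕ} (F : Submodule ℝ (Fin n → ℝ)) (α : Fin n → ℝ) (Q K : ℝ) :
    Set (Fin n → ℝ) :=
  {x | x ∈ F ∧ ‖x‖ ≤ Q ∧ |dotR x α| ≤ K⁻¹}

/-- The polar convex body within F: 𝒞* = {y ∈ F : x·y ≤ 1 for all x ∈ 𝒞}. -/
def polarIn {n : ℕ} (F : Submodule ℝ (Fin n → ℝ)) (C : Set (Fin n → ℝ)) :
    Set (Fin n → ℝ) :=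
  {y | y ∈ F ∧ ∀ x ∈ C, dotR x y ≤ 1}

/-!
Both bounds come from testing `y ∈ 𝒞(Q,K)*` against one well-chosen point of `𝒞(Q,K)`.
The multiples `±(K/|α|) α` lie in `𝒞(Q,K)`, because `x₀α − α₀x` vanishes on the line `ℝα`;
this gives `|y·α| ≤ |α|/K`. For `y ≠ 0` the point `(2Q|α||y|)⁻¹ y` lies in `𝒞(Q,K)` once
`2|α|QK ≥ 1`, since `|x₀α − α₀x| ≤ 2|α||x|`; pairing it with `y` and using `|y|² ≤ y·y`
gives `|y| ≤ 2|α|Q`.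
-/

section DotProduct

variable {n : ℕ}

lemma dotR_comm (x y : Fin n → ℝ) : dotR x y = dotR y x := by
  simp only [dotR, mul_comm]

lemma dotR_smul_left (c : ℝ) (x y : Fin n → ℝ) : dotR (c • x) y = c * dotR x y := by
  simp only [dotR, Finset.mul_sum, Pi.smul_apply, smul_eq_mul, mul_assoc]

lemma dotR_neg_left (x y : Fin n → ℝ) : dotR (-x) y = -dotR x y := by
  simpa using dotR_smul_left (-1) x y

lemma sq_norm_le_dotR_self [NeZero n] (y : Fin n → ℝ) : ‖y‖ ^ 2 ≤ dotR y y := by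
  obtain ⟨i, hi⟩ := Finite.exists_max fun i => |y i|
  have hnorm : ‖y‖ ≤ |y i| :=
    (pi_norm_le_iff_of_nonneg (abs_nonneg _)).mpr fun j => by simpa using hi j
  calc ‖y‖ ^ 2 ≤ |y i| ^ 2 := pow_le_pow_left₀ (norm_nonneg y) hnorm 2
    _ = y i * y i := by rw [sq_abs, sq]
    _ ≤ dotR y y := Finset.single_le_sum (fun j _ => mul_self_nonneg (y j)) (Finset.mem_univ i)

end DotProduct

section Polar

variable {n : ℕ} {F : Submodule ℝ (Fin n → ℝ)} {C : Set (Fin n → ℝ)} {x y : Fin n → ℝ}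

lemma dotR_le_one_of_mem_polarIn (hy : y ∈ polarIn F C) (hx : x ∈ C) : dotR x y ≤ 1 :=
  hy.2 x hx

lemma abs_dotR_le_one_of_mem_polarIn (hC : ∀ x ∈ C, -x ∈ C) (hy : y ∈ polarIn F C)
    (hx : x ∈ C) : |dotR x y| ≤ 1 := by
  have hneg := dotR_le_one_of_mem_polarIn hy (hC x hx)
  rw [dotR_neg_left] at hneg
  exact abs_le.mpr ⟨by linarith, dotR_le_one_of_mem_polarIn hy hx⟩

end Polar

section BodyC

variable {n : ℕ} [NeZero n] {F : Submodule ℝ (Fin n → ℝ)} {α x y : Fin n → ℝ} {Q K : ℝ}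

lemma neg_mem_bodyC (hx : x ∈ bodyC F α Q K) : -x ∈ bodyC F α Q K := by
  obtain ⟨hxF, hxK, hxQ⟩ := hx
  refine ⟨F.neg_mem hxF, by rwa [norm_neg], ?_⟩
  rwa [Pi.neg_apply, neg_smul, smul_neg, sub_neg_eq_add, neg_add_eq_sub, ← norm_neg, neg_sub]

lemma smul_mem_bodyC (hαF : α ∈ F) (hQ : 0 ≤ Q) {c : ℝ} (hc : ‖c • α‖ ≤ K) :
    c • α ∈ bodyC F α Q K := by
  refine ⟨F.smul_mem c hαF, hc, ?_⟩
  have hzero : (c • α) 0 • α - α 0 • c • α = 0 := by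
    rw [Pi.smul_apply, smul_eq_mul, mul_smul, smul_comm, sub_self]
  rw [hzero, norm_zero]
  exact inv_nonneg.mpr hQ

lemma norm_smul_sub_smul_le (x : Fin n → ℝ) : ‖x 0 • α - α 0 • x‖ ≤ 2 * ‖α‖ * ‖x‖ := by
  have hx0 : ‖x 0‖ ≤ ‖x‖ := norm_le_pi_norm x 0
  have hα0 : ‖α 0‖ ≤ ‖α‖ := norm_le_pi_norm α 0
  calc ‖x 0 • α - α 0 • x‖ ≤ ‖x 0‖ * ‖α‖ + ‖α 0‖ * ‖x‖ := by
        simpa only [norm_smul] using norm_sub_le (x 0 • α) (α 0 • x)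
    _ ≤ ‖x‖ * ‖α‖ + ‖α‖ * ‖x‖ := by gcongr
    _ = 2 * ‖α‖ * ‖x‖ := by ring

lemma mem_bodyC_of_norm_le (hxF : x ∈ F) (hxK : ‖x‖ ≤ K) (hxQ : 2 * ‖α‖ * ‖x‖ ≤ Q⁻¹) :
    x ∈ bodyC F α Q K :=
  ⟨hxF, hxK, (norm_smul_sub_smul_le x).trans hxQ⟩

lemma abs_dotR_le_of_mem_polarIn_bodyC (hαF : α ∈ F) (hα : α ≠ 0) (hQ : 0 ≤ Q) (hK : 0 < K)
    (hy : y ∈ polarIn F (bodyC F α Q K)) : |dotR y α| ≤ ‖α‖ * K⁻¹ := by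
  have hαpos : 0 < ‖α‖ := norm_pos_iff.mpr hα
  set t := K * ‖α‖⁻¹ with ht
  have htpos : 0 < t := by positivity
  have hmem : t • α ∈ bodyC F α Q K := smul_mem_bodyC hαF hQ <| by
    rw [norm_smul, Real.norm_of_nonneg htpos.le, ht, inv_mul_cancel_right₀ hαpos.ne']
  have hpair := abs_dotR_le_one_of_mem_polarIn (fun _ => neg_mem_bodyC) hy hmem
  rw [dotR_smul_left, abs_mul, abs_of_pos htpos, dotR_comm] at hpair
  calc |dotR y α| ≤ t⁻¹ := by rwa [← one_div, le_div_iff₀' htpos]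
    _ = ‖α‖ * K⁻¹ := by rw [ht, mul_inv, inv_inv, mul_comm]

lemma norm_le_of_mem_polarIn_bodyC (hα : α ≠ 0) (hQ : 0 < Q) (hQK : 1 ≤ 2 * ‖α‖ * Q * K)
    (hy : y ∈ polarIn F (bodyC F α Q K)) : ‖y‖ ≤ 2 * ‖α‖ * Q := by
  rcases eq_or_ne y 0 with rfl | hy0
  · rw [norm_zero]
    positivity
  have hypos : 0 < ‖y‖ := norm_pos_iff.mpr hy0
  have hαpos : 0 < ‖α‖ := norm_pos_iff.mpr hα
  set c := (2 * ‖α‖ * Q * ‖y‖)⁻¹ with hc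
  have hcpos : 0 < c := by positivity
  have hnorm : ‖c • y‖ = (2 * ‖α‖ * Q)⁻¹ := by
    rw [norm_smul, Real.norm_of_nonneg hcpos.le, hc]
    field_simp
  have hmem : c • y ∈ bodyC F α Q K := by
    refine mem_bodyC_of_norm_le (F.smul_mem c hy.1) ?_ ?_ <;> rw [hnorm]
    · exact (inv_le_iff_one_le_mul₀ (by positivity)).mpr (by linarith)
    · exact le_of_eq (by field_simp)
  have hpair := dotR_le_one_of_mem_polarIn hy hmem
  rw [dotR_smul_left] at hpair
  have hsq : c * ‖y‖ ^ 2 ≤ 1 :=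
    (mul_le_mul_of_nonneg_left (sq_norm_le_dotR_self y) hcpos.le).trans hpair
  rw [hc, sq, ← div_eq_inv_mul, div_le_one (by positivity)] at hsq
  nlinarith

end BodyC

theorem stmt_7_general (n : ℕ) [NeZero n]
    (α : Fin n → ℝ) (hα : α ≠ 0)
    (F : Submodule ℝ (Fin n → ℝ)) (hαF : α ∈ F)
    (Q K : ℝ) (hQ : 0 < Q) (hK : 0 < K) :
    (∀ y ∈ polarIn F (bodyC F α Q K), |dotR y α| ≤ ‖α‖ * K⁻¹) ∧
    (1 ≤ 2 * ‖α‖ * Q * K →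
      (∀ y ∈ polarIn F (bodyC F α Q K), ‖y‖ ≤ 2 * ‖α‖ * Q) ∧
      polarIn F (bodyC F α Q K) ⊆ bodyC' F α (2 * ‖α‖ * Q) (‖α‖⁻¹ * K)) := by
  have hdot y (hy : y ∈ polarIn F (bodyC F α Q K)) :=
    abs_dotR_le_of_mem_polarIn_bodyC hαF hα hQ.le hK hy
  refine ⟨hdot, fun hQK => ?_⟩
  have hnorm y (hy : y ∈ polarIn F (bodyC F α Q K)) :=
    norm_le_of_mem_polarIn_bodyC hα hQ hQK hy
  refine ⟨hnorm, fun y hy => ⟨hy.1, hnorm y hy, ?_⟩⟩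
  rw [mul_inv, inv_inv]
  exact hdot y hy

/-- any y in the polar body 𝒞(Q,K)* satisfies |y·α| ≤ |α|K⁻¹; if moreover
2|α|QK ≥ 1 then |y| ≤ 2|α|Q. Hence 𝒞(Q,K)* ⊆ 𝒞'(2|α|Q, |α|⁻¹K). -/
theorem stmt_7 (n : ℕ) [NeZero n] (hn : 2 ≤ n)
    (α : Fin n → ℝ) (hα : α ≠ 0) (hα0 : ‖α‖ = |α 0|)
    (F : Submodule ℝ (Fin n → ℝ)) (hαF : α ∈ F)
    (hFrat : ∃ S : Set (Fin n → ℝ), (∀ v ∈ S, ∀ i, ∃ r : ℚ, v i = (r : ℝ)) ∧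
      F = Submodule.span ℝ S)
    (Q K : ℝ) (hQ : 0 < Q) (hK : 0 < K) :
    (∀ y ∈ polarIn F (bodyC F α Q K), |dotR y α| ≤ ‖α‖ * K⁻¹) ∧
    (1 ≤ 2 * ‖α‖ * Q * K →
      (∀ y ∈ polarIn F (bodyC F α Q K), ‖y‖ ≤ 2 * ‖α‖ * Q) ∧
      polarIn F (bodyC F α Q K) ⊆ bodyC' F α (2 * ‖α‖ * Q) (‖α‖⁻¹ * K)) :=
  stmt_7_general n α hα F hαF Q K hQ hK
end

section
/- Given α ∈ ℝⁿ∖{0} with number of effective frequencies d, for any Q > max(1, d|α|⁻¹), there exist d periodic vectors ω₁,…,ω_d with periods T₁,…,T_d such that T₁ω₁,…,T_dω_d form a ℤ-basis of ℤⁿ ∩ F, and for each j: |α − ω_j| ≤ d(|α| T_j Q)⁻¹ and |α|⁻¹ ≤ T_j ≤ |α|⁻¹ d Ψ_d(Q). -/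
/-- A rational subspace of ℝⁿ: one spanned by vectors with rational coordinates. -/
def IsRationalSubspace {n : ℕ} (G : Submodule ℝ (Fin n → ℝ)) : Prop :=
  ∃ S : Set (Fin n → ℝ), (∀ v ∈ S, ∀ i, ∃ r : ℚ, v i = (r : ℝ)) ∧ G = Submodule.span ℝ S

/-!
The lattice points `z ∈ Λ` with `‖z₀α − α₀z‖ ≤ Q⁻¹` span a rational subspace which, by Dirichlet's
pigeonhole principle, contains `α` in its closure; hence they span `F`, and `Ψ_d(Q)` is attained by
`d` independent such points `xᵢ`. Choosing the vectors of a `ℤ`-basis of `Λ` pivot by pivot (as in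
the Hermite normal form) gives a basis `yⱼ = ∑ cⱼᵢ xᵢ` with `|cⱼᵢ| ≤ 1`, so that
`‖yⱼ‖ ≤ dΨ_d(Q)` and `‖yⱼ₀α − α₀yⱼ‖ ≤ d/Q < |α|`. The last bound forces `yⱼ₀ ≠ 0`, and
`Tⱼ = yⱼ₀/α₀`, `ωⱼ = yⱼ/Tⱼ` (after fixing the sign of `yⱼ`) are the required periodic vectors.
-/

open Submodule Metric Set

section IntegerPoints

variable {n : ℕ}

lemma mem_span_int_basisFun_iff {z : Fin n → ℝ} :
    z ∈ span ℤ (range (Pi.basisFun ℝ (Fin n))) ↔ ∀ i, ∃ m : ℤ, z i = m := by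
  simp [Module.Basis.mem_span_iff_repr_mem, eq_comm]

lemma finite_inter_closedBall_of_integer {s : Set (Fin n → ℝ)}
    (hs : ∀ z ∈ s, ∀ i, ∃ m : ℤ, z i = m) (R : ℝ) : (s ∩ closedBall 0 R).Finite := by
  refine (ZSpan.setFinite_inter (Pi.basisFun ℝ (Fin n)) isBounded_closedBall).subset
    fun z hz => ⟨hz.2, mem_span_int_basisFun_iff.2 (hs z hz.1)⟩

lemma eq_zero_of_norm_lt_one {z : Fin n → ℝ} (hz : ∀ i, ∃ m : ℤ, z i = m) (h : ‖z‖ < 1) :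
    z = 0 := by
  funext i
  obtain ⟨m, hm⟩ := hz i
  have : |(m : ℝ)| < 1 := hm ▸ (norm_le_pi_norm z i).trans_lt h
  rw [hm, Int.cast_eq_zero.2 (Int.abs_lt_one_iff.1 (by exact_mod_cast this)), Pi.zero_apply]

lemma exists_nsmul_integer {v : Fin n → ℝ} (hv : ∀ i, ∃ r : ℚ, v i = r) :
    ∃ D : ℕ, 0 < D ∧ ∀ i, ∃ m : ℤ, (D • v) i = m := by
  choose r hr using hv
  refine ⟨∏ i, (r i).den, Finset.prod_pos fun i _ => (r i).pos, fun i => ?_⟩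
  obtain ⟨c, hc⟩ := Finset.dvd_prod_of_mem (fun i => (r i).den) (Finset.mem_univ i)
  refine ⟨(r i).num * c, ?_⟩
  have h := congrArg (fun q : ℚ => (q : ℝ) * c) (Rat.mul_den_eq_num (r i))
  rw [Pi.smul_apply, hc, hr i, nsmul_eq_mul]
  push_cast at h ⊢
  linarith

lemma isRationalSubspace_span {s : Set (Fin n → ℝ)} (hs : ∀ v ∈ s, ∀ i, ∃ m : ℤ, v i = m) :
    IsRationalSubspace (span ℝ s) :=
  ⟨s, fun v hv i => let ⟨m, hm⟩ := hs v hv i; ⟨m, by rw [hm]; norm_cast⟩, rfl⟩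

lemma span_lattice_eq {F : Submodule ℝ (Fin n → ℝ)} (hF : IsRationalSubspace F)
    {Λ : Submodule ℤ (Fin n → ℝ)}
    (hΛ : ∀ x : Fin n → ℝ, x ∈ Λ ↔ x ∈ F ∧ ∀ i, ∃ m : ℤ, x i = (m : ℝ)) :
    span ℝ (Λ : Set (Fin n → ℝ)) = F := by
  obtain ⟨S, hS, rfl⟩ := hF
  refine le_antisymm (span_le.2 fun z hz => ((hΛ z).1 hz).1) (span_le.2 fun v hv => ?_)
  obtain ⟨D, hD, hDv⟩ := exists_nsmul_integer (hS v hv)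
  have hmem := (span ℝ (Λ : Set (Fin n → ℝ))).smul_mem (D : ℝ)⁻¹
    (subset_span ((hΛ _).2 ⟨nsmul_mem (subset_span hv) D, hDv⟩))
  rwa [← Nat.cast_smul_eq_nsmul ℝ, smul_smul, inv_mul_cancel₀ (by positivity), one_smul] at hmem

end IntegerPoints

lemma exists_lt_dist_lt_of_isCompact {X : Type*} [PseudoMetricSpace X] {K : Set X}
    (hK : IsCompact K) {u : ℕ → X} (hu : ∀ k, u k ∈ K) {ε : ℝ} (hε : 0 < ε) :
    ∃ k l, k < l ∧ dist (u k) (u l) < ε := by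
  obtain ⟨a, -, φ, hφ, hlim⟩ := hK.tendsto_subseq hu
  obtain ⟨N, hN⟩ := Metric.cauchySeq_iff.1 hlim.cauchySeq ε hε
  exact ⟨φ N, φ (N + 1), hφ N.lt_succ_self, hN _ le_rfl _ N.le_succ⟩

/-- Dirichlet's principle: the points `k • v` modulo `Λ` lie in the compact image of a cube, so
two of them are close. -/
theorem exists_nsmul_sub_mem_norm_lt {E : Type*} [NormedAddCommGroup E] [NormedSpace ℝ E]
    (Λ : Submodule ℤ E) {v : E} (hv : v ∈ span ℝ (Λ : Set E)) {ε : ℝ} (hε : 0 < ε) :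
    ∃ q : ℕ, 0 < q ∧ ∃ z ∈ Λ, ‖(q : ℝ) • v - z‖ < ε := by
  obtain ⟨m, c, e, rfl⟩ := mem_span_set'.1 hv
  let φ : (Fin m → ℝ) → E := fun t => ∑ i, t i • (e i : E)
  let w : ℕ → E := fun k => ∑ i, ⌊(k : ℝ) * c i⌋ • (e i : E)
  have hwΛ : ∀ k, w k ∈ Λ := fun k => Λ.sum_mem fun i _ => Λ.smul_mem _ (e i).2
  have hu : ∀ k : ℕ, (k : ℝ) • φ c - w k = φ fun i => Int.fract ((k : ℝ) * c i) := by
    intro k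
    simp only [φ, w, Finset.smul_sum, smul_smul, ← Finset.sum_sub_distrib, Int.fract, sub_smul,
      Int.cast_smul_eq_zsmul]
  have hK : IsCompact (φ '' Icc 0 1) := isCompact_Icc.image (by fun_prop)
  obtain ⟨k, l, hkl, hdist⟩ := exists_lt_dist_lt_of_isCompact hK
    (u := fun k => (k : ℝ) • φ c - w k)
    (fun k => hu k ▸ mem_image_of_mem _ ⟨fun i => Int.fract_nonneg _,
      fun i => (Int.fract_lt_one _).le⟩) hε
  refine ⟨l - k, Nat.sub_pos_of_lt hkl, w l - w k, Λ.sub_mem (hwΛ l) (hwΛ k), ?_⟩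
  rw [dist_comm, dist_eq_norm] at hdist
  refine lt_of_eq_of_lt (congrArg norm ?_) hdist
  simp only [φ, Nat.cast_sub hkl.le, sub_smul]
  abel

section LineDeviation

variable {n : ℕ} [NeZero n]

def lineDeviation (α : Fin n → ℝ) : (Fin n → ℝ) →ₗ[ℝ] (Fin n → ℝ) :=
  (LinearMap.proj 0).smulRight α - α 0 • LinearMap.id

@[simp]
lemma lineDeviation_apply (α x : Fin n → ℝ) : lineDeviation α x = x 0 • α - α 0 • x := rfl

lemma lineDeviation_self (α : Fin n → ℝ) : lineDeviation α α = 0 := by simp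

lemma norm_lineDeviation_le (α x : Fin n → ℝ) : ‖lineDeviation α x‖ ≤ 2 * ‖α‖ * ‖x‖ := by
  rw [lineDeviation_apply]
  calc ‖x 0 • α - α 0 • x‖ ≤ ‖x 0‖ * ‖α‖ + ‖α 0‖ * ‖x‖ := by
        rw [← norm_smul, ← norm_smul]; exact norm_sub_le _ _
    _ ≤ ‖x‖ * ‖α‖ + ‖α‖ * ‖x‖ := by gcongr <;> exact norm_le_pi_norm _ 0
    _ = 2 * ‖α‖ * ‖x‖ := by ring

/-- The span on the left is rational and, by `exists_nsmul_sub_mem_norm_lt`, contains `α` in its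
closure, which is itself. -/
theorem span_setOf_norm_lineDeviation_le {α : Fin n → ℝ} (hα : α 0 ≠ 0)
    {Λ : Submodule ℤ (Fin n → ℝ)} (hΛ : ∀ z ∈ Λ, ∀ i, ∃ m : ℤ, z i = m)
    (hαΛ : α ∈ span ℝ (Λ : Set (Fin n → ℝ)))
    (hmin : ∀ G, IsRationalSubspace G → α ∈ G → span ℝ (Λ : Set (Fin n → ℝ)) ≤ G)
    {r : ℝ} (hr : 0 < r) :
    span ℝ {z | z ∈ Λ ∧ ‖lineDeviation α z‖ ≤ r} = span ℝ (Λ : Set (Fin n → ℝ)) := by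
  refine le_antisymm (span_mono fun z hz => hz.1)
    (hmin _ (isRationalSubspace_span fun z hz => hΛ z hz.1) ?_)
  set W := span ℝ {z | z ∈ Λ ∧ ‖lineDeviation α z‖ ≤ r}
  rw [← SetLike.mem_coe, ← W.closed_of_finiteDimensional.closure_eq, Metric.mem_closure_iff]
  intro ε hε
  have hα' : 0 < ‖α 0‖ := norm_pos_iff.2 hα
  have hα2 : 0 < 2 * ‖α‖ := by linarith [norm_le_pi_norm α 0]
  obtain ⟨q, hq, z, hzΛ, hz⟩ := exists_nsmul_sub_mem_norm_lt Λ (smul_mem _ (α 0)⁻¹ hαΛ)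
    (lt_min (div_pos hr hα2) (div_pos hε hα'))
  set w := (q : ℝ) • (α 0)⁻¹ • α - z
  have hw₁ : 2 * ‖α‖ * ‖w‖ ≤ r := by
    have := (le_div_iff₀' hα2).1 (hz.le.trans (min_le_left _ _)); linarith
  have hw₂ : ‖α 0‖ * ‖w‖ < ε := (lt_div_iff₀' hα').1 (hz.trans_le (min_le_right _ _))
  have hdev : lineDeviation α z = -lineDeviation α w := by
    simp only [w, map_sub, map_smul, lineDeviation_self, smul_zero, zero_sub, neg_neg]
  refine ⟨(α 0 / q) • z, W.smul_mem _ (subset_span ⟨hzΛ, ?_⟩), ?_⟩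
  · rw [hdev, norm_neg]
    exact (norm_lineDeviation_le α w).trans hw₁
  · have hq' : (1 : ℝ) ≤ q := by exact_mod_cast hq
    have : α - (α 0 / q) • z = (α 0 / q) • w := by
      rw [smul_sub, smul_smul, smul_smul, div_mul_cancel₀ _ (by positivity), mul_inv_cancel₀ hα,
        one_smul]
    rw [dist_eq_norm, this, norm_smul, norm_div, Real.norm_natCast]
    calc ‖α 0‖ / q * ‖w‖ ≤ ‖α 0‖ * ‖w‖ := by gcongr; exact div_le_self hα'.le hq'
      _ < ε := hw₂

end LineDeviation

section LatticeBasis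

variable {d : ℕ} {L : Submodule ℤ (Fin d → ℝ)}

def pivotSet (L : Submodule ℤ (Fin d → ℝ)) (κ : Fin d) : Set (Fin d → ℝ) :=
  {c | c ∈ L ∧ ‖c‖ ≤ 1 ∧ 0 < c κ ∧ ∀ i, κ < i → c i = 0}

lemma intCast_mem_of_single_mem (hstd : ∀ i, Pi.single i 1 ∈ L) (m : Fin d → ℤ) :
    (fun i => (m i : ℝ)) ∈ L := by
  rw [← Finset.univ_sum_single (fun i => (m i : ℝ))]
  refine L.sum_mem fun i _ => ?_
  have : Pi.single i (m i : ℝ) = m i • (Pi.single i 1 : Fin d → ℝ) := by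
    ext j; by_cases h : j = i <;> simp [h]
  rw [this]
  exact L.smul_mem _ (hstd i)

lemma exists_min_apply_pivotSet (hstd : ∀ i, Pi.single i 1 ∈ L)
    (hfin : ((L : Set (Fin d → ℝ)) ∩ closedBall 0 1).Finite) (κ : Fin d) :
    ∃ u ∈ pivotSet L κ, ∀ c ∈ pivotSet L κ, u κ ≤ c κ := by
  have hsub : pivotSet L κ ⊆ (L : Set (Fin d → ℝ)) ∩ closedBall 0 1 :=
    fun c hc => ⟨hc.1, mem_closedBall_zero_iff.2 hc.2.1⟩
  refine Set.exists_min_image _ (fun c => c κ) (hfin.subset hsub)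
    ⟨Pi.single κ 1, hstd κ, by rw [Pi.norm_single, norm_one], by simp, fun i hi => by simp [hi.ne']⟩

/-- A nonzero remainder could be reduced modulo `ℤᵈ` to an element of `pivotSet L κ` with a
smaller pivot than `u`. -/
lemma sub_floor_smul_pivot_apply (hstd : ∀ i, Pi.single i 1 ∈ L) {κ : Fin d} {u : Fin d → ℝ}
    (hu : u ∈ pivotSet L κ) (hmin : ∀ c ∈ pivotSet L κ, u κ ≤ c κ) {z : Fin d → ℝ} (hz : z ∈ L)
    (hzκ : ∀ i, κ < i → z i = 0) : (z - ⌊z κ / u κ⌋ • u) κ = 0 := by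
  obtain ⟨huL, hu1, huκ, hu0⟩ := hu
  set z₁ := z - ⌊z κ / u κ⌋ • u
  have hz₁κ : z₁ κ = u κ * Int.fract (z κ / u κ) := by
    change z κ - (⌊z κ / u κ⌋ : ℤ) • u κ = _
    rw [zsmul_eq_mul, Int.fract]
    field_simp
  by_contra hne
  have hpos : 0 < z₁ κ := lt_of_le_of_ne (hz₁κ ▸ by positivity) (Ne.symm hne)
  have hlt : z₁ κ < u κ := hz₁κ ▸ mul_lt_of_lt_one_right huκ (Int.fract_lt_one _)
  set z₂ : Fin d → ℝ := z₁ - fun i => ((if i = κ then 0 else ⌊z₁ i⌋ : ℤ) : ℝ)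
  have hz₂ : ∀ i, z₂ i = if i = κ then z₁ κ else Int.fract (z₁ i) := by
    intro i; split_ifs with h <;> simp [z₂, h]
  have hz₂mem : z₂ ∈ pivotSet L κ := by
    refine ⟨L.sub_mem (L.sub_mem hz (L.smul_mem _ huL)) (intCast_mem_of_single_mem hstd _),
      ?_, ?_, ?_⟩
    · refine (pi_norm_le_iff_of_nonneg zero_le_one).2 fun i => ?_
      rw [Real.norm_eq_abs, hz₂]
      split_ifs
      · have : u κ ≤ 1 := (le_abs_self _).trans ((norm_le_pi_norm u κ).trans hu1)
        exact abs_le.2 ⟨by linarith, by linarith⟩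
      · exact abs_le.2 ⟨by linarith [Int.fract_nonneg (z₁ i)], (Int.fract_lt_one _).le⟩
    · simpa [hz₂] using hpos
    · intro i hi
      simp [hz₂, hi.ne', z₁, hzκ i hi, hu0 i hi]
  have := hmin z₂ hz₂mem
  rw [hz₂, if_pos rfl] at this
  linarith

theorem exists_span_eq_of_single_mem (hstd : ∀ i, Pi.single i 1 ∈ L)
    (hfin : ((L : Set (Fin d → ℝ)) ∩ closedBall 0 1).Finite) :
    ∃ y : Fin d → Fin d → ℝ, (∀ j, y j ∈ L ∧ ‖y j‖ ≤ 1) ∧ span ℤ (range y) = L := by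
  choose p hp hmin using exists_min_apply_pivotSet hstd hfin
  refine ⟨p, fun j => ⟨(hp j).1, (hp j).2.1⟩, le_antisymm (span_le.2 ?_) fun z hz => ?_⟩
  · rintro _ ⟨j, rfl⟩; exact (hp j).1
  suffices h : ∀ k : ℕ, ∀ z ∈ L, (∀ i : Fin d, k ≤ i → z i = 0) → z ∈ span ℤ (range p) from
    h d z hz fun i hi => absurd i.2 (not_lt.2 hi)
  intro k
  induction k with
  | zero =>
    intro z _ hz
    rw [show z = 0 from funext fun i => hz i (Nat.zero_le _)]
    exact zero_mem _
  | succ k ih =>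
    intro z hzL hz
    by_cases hk : k < d
    swap
    · exact ih z hzL fun i hi => absurd i.2 (by omega)
    set κ : Fin d := ⟨k, hk⟩
    have hzκ : ∀ i, κ < i → z i = 0 := fun i hi => hz i (Fin.lt_def.1 hi)
    have hred := ih (z - ⌊z κ / p κ κ⌋ • p κ) (L.sub_mem hzL (L.smul_mem _ (hp κ).1))
      fun i hi => by
        rcases Nat.lt_or_eq_of_le hi with hi | hi
        · simp [hzκ i (Fin.lt_def.2 hi), (hp κ).2.2.2 i (Fin.lt_def.2 hi)]
        · rw [show i = κ from Fin.ext hi.symm]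
          exact sub_floor_smul_pivot_apply hstd (hp κ) (hmin κ) hzL hzκ
    simpa using add_mem hred (zsmul_mem (subset_span (mem_range_self κ)) ⌊z κ / p κ κ⌋)

end LatticeBasis

lemma norm_sum_smul_le_of_norm_le_one {E : Type*} [SeminormedAddCommGroup E] [NormedSpace ℝ E]
    {d : ℕ} {c : Fin d → ℝ} (hc : ‖c‖ ≤ 1) {v : Fin d → E} {M : ℝ} (hv : ∀ i, ‖v i‖ ≤ M) :
    ‖∑ i, c i • v i‖ ≤ d * M :=
  calc ‖∑ i, c i • v i‖ ≤ ∑ i, ‖c i • v i‖ := norm_sum_le _ _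
    _ ≤ ∑ _i : Fin d, M := Finset.sum_le_sum fun i _ => by
        rw [norm_smul]
        exact (mul_le_of_le_one_left (norm_nonneg _) ((norm_le_pi_norm c i).trans hc)).trans
          (hv i)
    _ = d * M := by simp

theorem exists_basis_of_linearIndependent {E : Type*} [NormedAddCommGroup E] [NormedSpace ℝ E]
    {Λ : Submodule ℤ E} (hΛ : ∀ R, ((Λ : Set E) ∩ closedBall 0 R).Finite) {d : ℕ}
    {x : Fin d → E} (hx : LinearIndependent ℝ x) (hxΛ : ∀ i, x i ∈ Λ)
    (hΛx : (Λ : Set E) ⊆ span ℝ (range x)) :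
    ∃ y : Fin d → E, LinearIndependent ℤ y ∧ span ℤ (range y) = Λ ∧
      ∀ j, ∃ c : Fin d → ℝ, ‖c‖ ≤ 1 ∧ y j = ∑ i, c i • x i := by
  set φ := Fintype.linearCombination ℝ x
  have hφ : Function.Injective φ := linearIndependent_iff_injective_fintypeLinearCombination.1 hx
  set L := Λ.comap (φ.restrictScalars ℤ)
  have hstd : ∀ i, Pi.single i 1 ∈ L := fun i => by
    simp [L, φ, Fintype.linearCombination_apply_single, hxΛ i]
  have hfin : ((L : Set (Fin d → ℝ)) ∩ closedBall 0 1).Finite := by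
    refine ((hΛ (d * ‖x‖)).preimage hφ.injOn).subset fun c hc => ⟨hc.1, ?_⟩
    rw [mem_closedBall_zero_iff, Fintype.linearCombination_apply]
    exact norm_sum_smul_le_of_norm_le_one (mem_closedBall_zero_iff.1 hc.2) (norm_le_pi_norm x)
  obtain ⟨y, hy, hyL⟩ := exists_span_eq_of_single_mem hstd hfin
  have hyli : LinearIndependent ℝ y := by
    refine linearIndependent_of_top_le_span_of_card_eq_finrank ?_ (by simp)
    rw [← (Pi.basisFun ℝ (Fin d)).span_eq, span_le]
    rintro _ ⟨i, rfl⟩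
    exact span_le_restrictScalars ℤ ℝ _ (hyL ▸ by simpa using hstd i)
  refine ⟨φ ∘ y, (hyli.map' φ (LinearMap.ker_eq_bot.2 hφ)).restrict_scalars' ℤ, ?_,
    fun j => ⟨y j, (hy j).2, Fintype.linearCombination_apply ℝ x (y j)⟩⟩
  have hrange : Λ ≤ LinearMap.range (φ.restrictScalars ℤ) := by
    rw [LinearMap.range_restrictScalars, Fintype.range_linearCombination]; exact hΛx
  rw [range_comp, ← LinearMap.coe_restrictScalars ℤ, ← map_span, hyL, map_comap_eq,
    inf_eq_right.2 hrange]

theorem exists_basis_norm_le_of_linearIndependent {n d : ℕ} [NeZero n] {α : Fin n → ℝ}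
    {Λ : Submodule ℤ (Fin n → ℝ)} (hΛ : ∀ z ∈ Λ, ∀ i, ∃ m : ℤ, z i = m)
    {x : Fin d → (Fin n → ℝ)} (hx : LinearIndependent ℝ x) (hxΛ : ∀ i, x i ∈ Λ)
    (hΛx : (Λ : Set (Fin n → ℝ)) ⊆ span ℝ (range x)) {M r : ℝ} (hxM : ∀ i, ‖x i‖ ≤ M)
    (hxr : ∀ i, ‖lineDeviation α (x i)‖ ≤ r) :
    ∃ y : Fin d → (Fin n → ℝ), LinearIndependent ℤ y ∧ span ℤ (range y) = Λ ∧
      ∀ j, ‖y j‖ ≤ d * M ∧ ‖lineDeviation α (y j)‖ ≤ d * r := by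
  obtain ⟨y, hyli, hyspan, hyx⟩ :=
    exists_basis_of_linearIndependent (finite_inter_closedBall_of_integer hΛ) hx hxΛ hΛx
  refine ⟨y, hyli, hyspan, fun j => ?_⟩
  obtain ⟨c, hc, hyj⟩ := hyx j
  rw [hyj, map_sum]
  simp only [map_smul]
  exact ⟨norm_sum_smul_le_of_norm_le_one hc hxM, norm_sum_smul_le_of_norm_le_one hc hxr⟩

lemma exists_linearIndependent_fin {V : Type*} [AddCommGroup V] [Module ℝ V]
    [FiniteDimensional ℝ V] {s : Set V} {d : ℕ} (hd : d = Module.finrank ℝ (span ℝ s)) :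
    ∃ x : Fin d → V, LinearIndependent ℝ x ∧ ∀ i, x i ∈ s := by
  obtain ⟨b, hbs, hbspan, hbli⟩ := exists_linearIndependent ℝ s
  have : Fintype b := hbli.setFinite.fintype
  have hcard : Fintype.card b = d := by
    rw [hd, ← hbspan, finrank_span_set_eq_card hbli, Set.toFinset_card]
  let e := Fintype.equivFinOfCardEq hcard
  exact ⟨fun i => e.symm i, hbli.comp _ e.symm.injective, fun i => hbs (e.symm i).2⟩

/-- Only finitely many admissible families have norm below that of a given one, so a family of
minimal norm exists. -/
theorem exists_linearIndependent_norm_le_sInf {n d : ℕ} {s : Set (Fin n → ℝ)}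
    (hs : ∀ z ∈ s, ∀ i, ∃ m : ℤ, z i = m) {p : (Fin n → ℝ) → Prop}
    (hd : d = Module.finrank ℝ (span ℝ {z | z ∈ s ∧ p z})) :
    ∃ x : Fin d → (Fin n → ℝ), LinearIndependent ℝ x ∧ (∀ i, x i ∈ s ∧ p (x i)) ∧
      ∀ i, ‖x i‖ ≤ sInf {K : ℝ | 0 < K ∧ ∃ x : Fin d → (Fin n → ℝ), LinearIndependent ℝ x ∧
        ∀ i, x i ∈ s ∧ ‖x i‖ ≤ K ∧ p (x i)} := by
  set P := {x : Fin d → (Fin n → ℝ) | LinearIndependent ℝ x ∧ ∀ i, x i ∈ s ∧ p (x i)}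
  obtain ⟨x₀, hx₀li, hx₀⟩ := exists_linearIndependent_fin hd
  have hx₀P : x₀ ∈ P := ⟨hx₀li, hx₀⟩
  have hfin : {x | x ∈ P ∧ ‖x‖ ≤ ‖x₀‖}.Finite :=
    (Set.Finite.pi fun _ => finite_inter_closedBall_of_integer hs ‖x₀‖).subset
      fun x hx i _ => ⟨(hx.1.2 i).1, mem_closedBall_zero_iff.2 ((norm_le_pi_norm x i).trans hx.2)⟩
  obtain ⟨x, ⟨hxP, hxx₀⟩, hmin⟩ := Set.exists_min_image _ (‖·‖) hfin ⟨x₀, hx₀P, le_rfl⟩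
  have hle : ∀ x' ∈ P, ‖x‖ ≤ ‖x'‖ := fun x' hx' =>
    (le_total ‖x'‖ ‖x₀‖).elim (fun h => hmin x' ⟨hx', h⟩) hxx₀.trans
  refine ⟨x, hxP.1, hxP.2, fun i => (norm_le_pi_norm x i).trans (le_csInf
    ⟨‖x‖ + 1, by positivity, x, hxP.1, fun i => ⟨(hxP.2 i).1, ?_, (hxP.2 i).2⟩⟩ ?_)⟩
  · linarith [norm_le_pi_norm x i]
  · rintro K ⟨hK, x', hx'li, hx'⟩
    exact (hle x' ⟨hx'li, fun i => ⟨(hx' i).1, (hx' i).2.2⟩⟩).trans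
      ((pi_norm_le_iff_of_nonneg hK.le).2 fun i => (hx' i).2.1)

section Period

variable {n : ℕ} [NeZero n] {α y : Fin n → ℝ}

lemma apply_zero_ne_zero (hα : ‖α‖ = |α 0|) (hy : ∀ i, ∃ m : ℤ, y i = m) (hy0 : y ≠ 0)
    (hdev : ‖lineDeviation α y‖ < ‖α‖) : y 0 ≠ 0 := by
  intro h
  rw [lineDeviation_apply, h, zero_smul, zero_sub, norm_neg, norm_smul, Real.norm_eq_abs, ← hα]
    at hdev
  exact hy0 (eq_zero_of_norm_lt_one hy (lt_of_mul_lt_mul_left (hdev.trans_eq (mul_one _).symm)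
    (norm_nonneg _)))

lemma abs_apply_zero_eq (hα : ‖α‖ = |α 0|) (hT : 0 < y 0 / α 0) :
    |y 0| = y 0 / α 0 * ‖α‖ := by
  have hα0 : α 0 ≠ 0 := fun h => by simp [h] at hT
  rw [hα, ← abs_of_pos hT, ← abs_mul, div_mul_cancel₀ _ hα0]

lemma norm_sub_inv_smul_eq (hα : ‖α‖ = |α 0|) (hT : 0 < y 0 / α 0) :
    ‖α - (y 0 / α 0)⁻¹ • y‖ = (‖α‖ * (y 0 / α 0))⁻¹ * ‖lineDeviation α y‖ := by
  have hy0 : y 0 ≠ 0 := fun h => by simp [h] at hT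
  have : α - (y 0 / α 0)⁻¹ • y = (y 0)⁻¹ • lineDeviation α y := by
    rw [lineDeviation_apply, smul_sub, smul_smul, inv_mul_cancel₀ hy0, one_smul, smul_smul,
      inv_div, div_eq_inv_mul]
  rw [this, norm_smul, norm_inv, Real.norm_eq_abs, abs_apply_zero_eq hα hT, mul_comm ‖α‖]

lemma inv_norm_le_div (hα : ‖α‖ = |α 0|) (hy : ∀ i, ∃ m : ℤ, y i = m) (hT : 0 < y 0 / α 0) :
    ‖α‖⁻¹ ≤ y 0 / α 0 := by
  have hy0 : y 0 ≠ 0 := fun h => by simp [h] at hT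
  obtain ⟨m, hm⟩ := hy 0
  have h1 : (1 : ℝ) ≤ |y 0| := by
    rw [hm] at hy0 ⊢; exact_mod_cast Int.one_le_abs (by exact_mod_cast hy0)
  rw [abs_apply_zero_eq hα hT] at h1
  have hαpos : 0 < ‖α‖ := pos_of_mul_pos_right (one_pos.trans_le h1) hT.le
  rwa [inv_le_iff_one_le_mul₀' hαpos, mul_comm]

lemma div_le_inv_norm_mul (hα : ‖α‖ = |α 0|) (hT : 0 < y 0 / α 0) :
    y 0 / α 0 ≤ ‖α‖⁻¹ * ‖y‖ := by
  have hαpos : 0 < ‖α‖ := hα ▸ abs_pos.2 fun h => by simp [h] at hT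
  rw [le_inv_mul_iff₀ hαpos, mul_comm, ← abs_apply_zero_eq hα hT, ← Real.norm_eq_abs]
  exact norm_le_pi_norm y 0

end Period

lemma span_range_units_smul {R M ι : Type*} [Ring R] [AddCommGroup M] [Module R M] (v : ι → M)
    (w : ι → Rˣ) : span R (range (w • v)) = span R (range v) := by
  refine le_antisymm (span_le.2 ?_) (span_le.2 ?_) <;> rintro _ ⟨i, rfl⟩
  · exact (span R (range v)).smul_of_tower_mem (w i) (subset_span (mem_range_self i))
  · rw [← inv_smul_smul (w i) (v i)]
    exact (span R (range (w • v))).smul_of_tower_mem _ (subset_span (mem_range_self i))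

lemma norm_units_int_smul {E : Type*} [SeminormedAddCommGroup E] (s : ℤˣ) (v : E) :
    ‖s • v‖ = ‖v‖ := by
  rcases Int.units_eq_one_or s with rfl | rfl <;> simp

lemma exists_units_smul_div_pos {n : ℕ} [NeZero n] {α y : Fin n → ℝ} (hα : α 0 ≠ 0)
    (hy : y 0 ≠ 0) : ∃ s : ℤˣ, 0 < (s • y) 0 / α 0 := by
  rcases (div_ne_zero hy hα).lt_or_gt with h | h
  · exact ⟨-1, by simpa [neg_div] using h⟩
  · exact ⟨1, by simpa using h⟩

/-- The witnesses are `Tⱼ = yⱼ₀ / α₀` and `ωⱼ = Tⱼ⁻¹ yⱼ`, after replacing `yⱼ` by `-yⱼ` where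
needed to make `Tⱼ > 0`. -/
theorem exists_periodic_approx_of_basis {n d : ℕ} [NeZero n] {α : Fin n → ℝ}
    (hα : ‖α‖ = |α 0|) {Λ : Submodule ℤ (Fin n → ℝ)} (hΛ : ∀ z ∈ Λ, ∀ i, ∃ m : ℤ, z i = m)
    {y : Fin d → (Fin n → ℝ)} (hyli : LinearIndependent ℤ y) (hyspan : span ℤ (range y) = Λ)
    {B δ : ℝ} (hδ : δ < ‖α‖) (hyB : ∀ j, ‖y j‖ ≤ B) (hyδ : ∀ j, ‖lineDeviation α (y j)‖ ≤ δ) :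
    ∃ (ω : Fin d → (Fin n → ℝ)) (T : Fin d → ℝ),
      (∀ j, 0 < T j) ∧
      (∀ j, T j • ω j ∈ Λ) ∧
      LinearIndependent ℤ (fun j => T j • ω j) ∧
      span ℤ (range fun j => T j • ω j) = Λ ∧
      ∀ j, ‖α - ω j‖ ≤ δ * (‖α‖ * T j)⁻¹ ∧ ‖α‖⁻¹ ≤ T j ∧ T j ≤ ‖α‖⁻¹ * B := by
  have hyΛ : ∀ j, y j ∈ Λ := fun j => hyspan ▸ subset_span (mem_range_self j)
  have hdev : ∀ j, ‖lineDeviation α (y j)‖ < ‖α‖ := fun j => (hyδ j).trans_lt hδ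
  have hαpos : ∀ j : Fin d, 0 < ‖α‖ := fun j => (norm_nonneg _).trans_lt (hdev j)
  have hα0 : ∀ j : Fin d, α 0 ≠ 0 := fun j => abs_pos.1 (hα ▸ hαpos j)
  choose s hs using fun j => exists_units_smul_div_pos (hα0 j)
    (apply_zero_ne_zero hα (hΛ _ (hyΛ j)) (hyli.ne_zero j) (hdev j))
  set T : Fin d → ℝ := fun j => (s j • y j) 0 / α 0
  have hsyΛ : ∀ j, s j • y j ∈ Λ := fun j => Λ.smul_of_tower_mem (s j) (hyΛ j)
  have hTω : ∀ j, T j • (T j)⁻¹ • s j • y j = s j • y j := fun j => smul_inv_smul₀ (hs j).ne' _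
  refine ⟨fun j => (T j)⁻¹ • s j • y j, T, hs, ?_⟩
  simp only [hTω]
  refine ⟨hsyΛ, hyli.units_smul s, by rw [← hyspan]; exact span_range_units_smul y s, fun j => ⟨?_,
    inv_norm_le_div hα (hΛ _ (hsyΛ j)) (hs j), ?_⟩⟩
  · rw [norm_sub_inv_smul_eq hα (hs j), mul_comm δ]
    have := mul_pos (hαpos j) (hs j)
    gcongr
    rw [Units.smul_def, map_zsmul, ← Units.smul_def, norm_units_int_smul]
    exact hyδ j
  · refine (div_le_inv_norm_mul hα (hs j)).trans ?_
    rw [norm_units_int_smul]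
    gcongr
    exact hyB j

theorem stmt_9_general (n : ℕ) [NeZero n]
    (α : Fin n → ℝ) (hα : α ≠ 0) (hα0 : ‖α‖ = |α 0|)
    (F : Submodule ℝ (Fin n → ℝ)) (hαF : α ∈ F)
    (hFrat : IsRationalSubspace F)
    (hFmin : ∀ G : Submodule ℝ (Fin n → ℝ), IsRationalSubspace G → α ∈ G → F ≤ G)
    (d : ℕ) (hd : d = Module.finrank ℝ F)
    (Λ : Submodule ℤ (Fin n → ℝ))
    (hΛ : ∀ x : Fin n → ℝ, x ∈ Λ ↔ x ∈ F ∧ ∀ i, ∃ m : ℤ, x i = (m : ℝ))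
    (Ψ : ℝ → ℝ)
    (hΨ : ∀ Q : ℝ, 1 ≤ Q → Ψ Q = sInf {K : ℝ | 0 < K ∧
      ∃ x : Fin d → (Fin n → ℝ), LinearIndependent ℝ x ∧
        ∀ i, x i ∈ Λ ∧ ‖x i‖ ≤ K ∧ ‖x i 0 • α - α 0 • x i‖ ≤ Q⁻¹})
    (Q : ℝ) (hQ : max 1 ((d : ℝ) * ‖α‖⁻¹) < Q) :
    ∃ (ω : Fin d → (Fin n → ℝ)) (T : Fin d → ℝ),
      (∀ j, 0 < T j) ∧
      (∀ j, T j • ω j ∈ Λ) ∧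
      LinearIndependent ℤ (fun j => T j • ω j) ∧
      Submodule.span ℤ (Set.range fun j => T j • ω j) = Λ ∧
      ∀ j, ‖α - ω j‖ ≤ (d : ℝ) * (‖α‖ * T j * Q)⁻¹ ∧
        ‖α‖⁻¹ ≤ T j ∧ T j ≤ ‖α‖⁻¹ * (d : ℝ) * Ψ Q := by
  have hαpos : 0 < ‖α‖ := norm_pos_iff.2 hα
  have hQ1 : 1 < Q := (le_max_left _ _).trans_lt hQ
  have hδ : (d : ℝ) * Q⁻¹ < ‖α‖ := by
    have := (le_max_right _ _).trans_lt hQ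
    rw [mul_inv_lt_iff₀ hαpos] at this
    rwa [mul_inv_lt_iff₀ (by linarith), mul_comm]
  have hΛint : ∀ z ∈ Λ, ∀ i, ∃ m : ℤ, z i = m := fun z hz => ((hΛ z).1 hz).2
  have hΛF := span_lattice_eq hFrat hΛ
  have hslab := span_setOf_norm_lineDeviation_le (abs_pos.1 (hα0 ▸ hαpos)) hΛint (hΛF ▸ hαF)
    (hΛF ▸ hFmin) (inv_pos.2 (zero_lt_one.trans hQ1))
  obtain ⟨x, hxli, hxs, hxΨ⟩ := exists_linearIndependent_norm_le_sInf (d := d) hΛint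
    (p := fun z => ‖lineDeviation α z‖ ≤ Q⁻¹) (by rw [hd, ← hΛF, ← hslab]; rfl)
  replace hxΨ : ∀ i, ‖x i‖ ≤ Ψ Q := fun i => (hxΨ i).trans_eq (hΨ Q hQ1.le).symm
  have hxF : span ℝ (range x) = F := eq_of_le_of_finrank_le
    (span_le.2 (range_subset_iff.2 fun i => ((hΛ _).1 (hxs i).1).1))
    (by rw [finrank_span_eq_card hxli, Fintype.card_fin, hd])
  obtain ⟨y, hyli, hyspan, hy⟩ := exists_basis_norm_le_of_linearIndependent hΛint hxli
    (fun i => (hxs i).1) (hxF ▸ fun z hz => ((hΛ z).1 hz).1) hxΨ fun i => (hxs i).2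
  obtain ⟨ω, T, hT, hTΛ, hTli, hTspan, hTω⟩ := exists_periodic_approx_of_basis hα0 hΛint hyli
    hyspan hδ (fun j => (hy j).1) fun j => (hy j).2
  refine ⟨ω, T, hT, hTΛ, hTli, hTspan, fun j => ⟨(hTω j).1.trans_eq (by ring), (hTω j).2.1,
    (hTω j).2.2.trans_eq (mul_assoc _ _ _).symm⟩⟩

/-- Proposition `corutile`: for α ∈ ℝⁿ∖{0} with d effective frequencies and
any Q > max(1, d|α|⁻¹), there exist d periodic vectors ω₁,…,ω_d with periods T₁,…,T_d
such that T₁ω₁,…,T_dω_d form a ℤ-basis of Λ = ℤⁿ ∩ F, and for each j: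
|α − ω_j| ≤ d(|α|T_jQ)⁻¹ and |α|⁻¹ ≤ T_j ≤ |α|⁻¹dΨ_d(Q).
Here the norm on Fin n → ℝ is the sup norm, F is the smallest rational subspace
containing α, and Ψ_d is given by its defining formula. -/
theorem stmt_9 (n : ℕ) [NeZero n] (hn : 2 ≤ n)
    (α : Fin n → ℝ) (hα : α ≠ 0) (hα0 : ‖α‖ = |α 0|)
    (F : Submodule ℝ (Fin n → ℝ)) (hαF : α ∈ F)
    (hFrat : IsRationalSubspace F)
    (hFmin : ∀ G : Submodule ℝ (Fin n → ℝ), IsRationalSubspace G → α ∈ G → F ≤ G)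
    (d : ℕ) (hd : d = Module.finrank ℝ F)
    (Λ : Submodule ℤ (Fin n → ℝ))
    (hΛ : ∀ x : Fin n → ℝ, x ∈ Λ ↔ x ∈ F ∧ ∀ i, ∃ m : ℤ, x i = (m : ℝ))
    (Ψ : ℝ → ℝ)
    (hΨ : ∀ Q : ℝ, 1 ≤ Q → Ψ Q = sInf {K : ℝ | 0 < K ∧
      ∃ x : Fin d → (Fin n → ℝ), LinearIndependent ℝ x ∧
        ∀ i, x i ∈ Λ ∧ ‖x i‖ ≤ K ∧ ‖x i 0 • α - α 0 • x i‖ ≤ Q⁻¹})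
    (Q : ℝ) (hQ : max 1 ((d : ℝ) * ‖α‖⁻¹) < Q) :
    ∃ (ω : Fin d → (Fin n → ℝ)) (T : Fin d → ℝ),
      (∀ j, 0 < T j) ∧
      (∀ j, T j • ω j ∈ Λ) ∧
      LinearIndependent ℤ (fun j => T j • ω j) ∧
      Submodule.span ℤ (Set.range fun j => T j • ω j) = Λ ∧
      ∀ j, ‖α - ω j‖ ≤ (d : ℝ) * (‖α‖ * T j * Q)⁻¹ ∧
        ‖α‖⁻¹ ≤ T j ∧ T j ≤ ‖α‖⁻¹ * (d : ℝ) * Ψ Q :=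
  stmt_9_general n α hα hα0 F hαF hFrat hFmin d hd Λ hΛ Ψ hΨ Q hQ
end

section
/- Let ω ∈ ℝⁿ∖{0} be T-periodic (Tω ∈ ℤⁿ) and let P be a bounded real-analytic vector field on 𝕋ⁿ_s. Define [P] = ∫₀¹ P∘X_{Tω}^t dt and V = T∫₀¹ (P − [P])∘X_{Tω}^t · t dt, where X_{Tω}^t(θ) = θ + tTω. Then [V, X_ω] = P − [P], where X_ω is the constant vector field ω and [·,·] is the Lie bracket. -/
/-!
Put `c = Tω`, so that `V = T • W` with `W x = ∫₀¹ t (P - [P])(x + t c) dt` and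
`DV(z)ω = DW(z)c`. Since `[P]` is constant along the orbits `t ↦ x + t c`, we have
`W x = ∫₀¹ (t - 1/2) P(x + t c) dt`. A Cauchy estimate on a neighbourhood of the compact orbit
segment justifies differentiating under the integral, so
`DW(z)c = ∫₀¹ (t - 1/2) (d/dt) P(z + t c) dt`; integrating by parts and using `P(z + c) = P z`,
this is `P z - ∫₀¹ P(z + t c) dt = P z - [P] z`.
-/

open MeasureTheory

/-- The complex strip 𝕋ⁿ_s (modeled by ℤⁿ-periodic functions on {z ∈ ℂⁿ : |Im z| < s}). -/
def strip (n : ℕ) (s : ℝ) : Set (Fin n → ℂ) := {z | ∀ i, |(z i).im| < s}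

open Metric Set Filter Topology

section ConstantFlow

variable {E F : Type*} [NormedAddCommGroup E] [NormedSpace ℂ E]
  [NormedAddCommGroup F] [NormedSpace ℂ F] {P : E → F} {U : Set E}

/-- The orbit average `[P] x` of the paper, for the flow `t ↦ x + t c`. -/
noncomputable def orbitAverage (P : E → F) (c x : E) : F :=
  ∫ t in (0 : ℝ)..1, P (x + (t : ℂ) • c)

theorem orbitAverage_add_ofReal_smul {c : E} (hper : ∀ x, P (x + c) = P x) (x : E) (u : ℝ) :
    orbitAverage P c (x + (u : ℂ) • c) = orbitAverage P c x := by
  set f : ℝ → F := fun t => P (x + (t : ℂ) • c)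
  have hf : Function.Periodic f 1 := fun t => by
    simp only [f, Complex.ofReal_add, Complex.ofReal_one, add_smul, one_smul, ← add_assoc, hper]
  calc orbitAverage P c (x + (u : ℂ) • c) = ∫ t in (0 : ℝ)..1, f (t + u) := by
        simp only [orbitAverage, f, Complex.ofReal_add, add_smul, add_assoc, add_comm ((u : ℂ) • c)]
    _ = ∫ t in u..u + 1, f t := by
        rw [intervalIntegral.integral_comp_add_right, zero_add, add_comm]
    _ = ∫ t in (0 : ℝ)..0 + 1, f t := hf.intervalIntegral_add_eq u 0
    _ = orbitAverage P c x := by rw [zero_add]; rfl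

theorem intervalIntegral_smul_sub_orbitAverage [CompleteSpace F] {c x : E}
    (hper : ∀ x, P (x + c) = P x)
    (hint : IntervalIntegrable (fun t : ℝ => P (x + (t : ℂ) • c)) volume 0 1) :
    ∫ t in (0 : ℝ)..1, (t : ℂ) • (P (x + (t : ℂ) • c) - orbitAverage P c (x + (t : ℂ) • c)) =
      ∫ t in (0 : ℝ)..1, ((t : ℂ) - 2⁻¹) • P (x + (t : ℂ) • c) := by
  have hmean : ∫ t in (0 : ℝ)..1, (t : ℂ) = 2⁻¹ := by
    rw [intervalIntegral.integral_ofReal, integral_id]; norm_num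
  simp only [orbitAverage_add_ofReal_smul hper, smul_sub, sub_smul]
  rw [intervalIntegral.integral_sub (hint.continuousOn_smul (by fun_prop))
      ((by fun_prop : Continuous fun t : ℝ => (t : ℂ) • orbitAverage P c x).intervalIntegrable _ _),
    intervalIntegral.integral_sub (hint.continuousOn_smul (by fun_prop))
      (hint.continuousOn_smul continuousOn_const),
    intervalIntegral.integral_smul_const, intervalIntegral.integral_smul, hmean]
  rfl

theorem IsCompact.exists_thickening_subset_forall_norm_fderiv_le [ProperSpace E]
    {K : Set E} (hK : IsCompact K) (hU : IsOpen U) (hKU : K ⊆ U)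
    (hP : DifferentiableOn ℂ P U) :
    ∃ δ > 0, thickening δ K ⊆ U ∧ ∃ C, ∀ w ∈ thickening δ K, ‖fderiv ℂ P w‖ ≤ C := by
  obtain ⟨r, hr, hrU⟩ := hK.exists_cthickening_subset_open hU hKU
  obtain ⟨M, hM⟩ := hK.cthickening.exists_bound_of_continuousOn (hP.continuousOn.mono hrU)
  have hthick : ∀ w ∈ thickening (r / 2) K, ball w (r / 2) ⊆ cthickening r K := fun w hw =>
    calc ball w (r / 2) ⊆ thickening (r / 2) (thickening (r / 2) K) := ball_subset_thickening hw _
      _ ⊆ thickening r K := by simpa using thickening_thickening_subset (r / 2) (r / 2) K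
      _ ⊆ cthickening r K := thickening_subset_cthickening r K
  refine ⟨r / 2, half_pos hr,
    (thickening_subset_cthickening_of_le (half_le_self hr.le) K).trans hrU,
    2 * M / (r / 2), fun w hw => ?_⟩
  -- Cauchy estimate: `P` maps `ball w (r / 2)` into a ball of radius `2 M` around `P w`.
  refine Complex.norm_fderiv_le_div_of_mapsTo_ball (hP.mono ((hthick w hw).trans hrU))
    (fun y hy => ?_) (half_pos hr)
  have hw' : w ∈ cthickening r K := hthick w hw (mem_ball_self (half_pos hr))
  rw [mem_closedBall, dist_eq_norm, two_mul]
  exact (norm_sub_le _ _).trans (add_le_add (hM y (hthick w hw hy)) (hM w hw'))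

theorem exists_forall_norm_fderiv_add_ofReal_smul_le [ProperSpace E]
    (hU : IsOpen U) (hP : DifferentiableOn ℂ P U) {a b : ℝ} {c z : E}
    (hz : ∀ t ∈ uIcc a b, z + (t : ℂ) • c ∈ U) :
    ∃ δ > 0, ∃ C, ∀ x ∈ ball z δ, ∀ t ∈ uIcc a b,
      x + (t : ℂ) • c ∈ U ∧ ‖fderiv ℂ P (x + (t : ℂ) • c)‖ ≤ C := by
  have hK : IsCompact ((fun t : ℝ => z + (t : ℂ) • c) '' uIcc a b) :=
    isCompact_uIcc.image (by fun_prop)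
  obtain ⟨δ, hδ, hδU, C, hC⟩ :=
    hK.exists_thickening_subset_forall_norm_fderiv_le hU (image_subset_iff.2 hz) hP
  refine ⟨δ, hδ, C, fun x hx t ht => ?_⟩
  have hmem : x + (t : ℂ) • c ∈ thickening δ ((fun t : ℝ => z + (t : ℂ) • c) '' uIcc a b) :=
    mem_thickening_iff.2 ⟨_, mem_image_of_mem _ ht, by simpa using hx⟩
  exact ⟨hδU hmem, hC _ hmem⟩

theorem DifferentiableAt.hasDerivAt_add_ofReal_smul {c z : E} {t : ℝ}
    (hP : DifferentiableAt ℂ P (z + (t : ℂ) • c)) :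
    HasDerivAt (fun t : ℝ => P (z + (t : ℂ) • c)) (fderiv ℂ P (z + (t : ℂ) • c) c) t := by
  have hline : HasDerivAt (fun t : ℝ => z + (t : ℂ) • c) c t := by
    simpa using ((hasDerivAt_id t).ofReal_comp.smul_const c).const_add z
  exact (hP.hasFDerivAt.restrictScalars ℝ).comp_hasDerivAt t hline

variable [FiniteDimensional ℂ E] [FiniteDimensional ℂ F]

theorem intervalIntegrable_fderiv_add_ofReal_smul (hU : IsOpen U) (hP : DifferentiableOn ℂ P U)
    {a b : ℝ} {c z : E} (hz : ∀ t ∈ uIcc a b, z + (t : ℂ) • c ∈ U) :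
    IntervalIntegrable (fun t : ℝ => fderiv ℂ P (z + (t : ℂ) • c)) volume a b := by
  obtain ⟨δ, hδ, C, hC⟩ := exists_forall_norm_fderiv_add_ofReal_smul_le hU hP hz
  borelize E (E →L[ℂ] F)
  refine (intervalIntegrable_const (c := C)).mono_fun'
    ((measurable_fderiv ℂ P).comp
      (by fun_prop : Continuous fun t : ℝ => z + (t : ℂ) • c).measurable).aestronglyMeasurable
    ((ae_restrict_iff' measurableSet_uIoc).2 (Eventually.of_forall fun t ht =>
      (hC z (mem_ball_self hδ) t (uIoc_subset_uIcc ht)).2))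

theorem hasFDerivAt_intervalIntegral_smul_add_ofReal_smul (hU : IsOpen U)
    (hP : DifferentiableOn ℂ P U) {g : ℝ → ℂ} (hg : Continuous g) {a b : ℝ} {c z : E}
    (hz : ∀ t ∈ uIcc a b, z + (t : ℂ) • c ∈ U) :
    HasFDerivAt (fun x => ∫ t in a..b, g t • P (x + (t : ℂ) • c))
      (∫ t in a..b, g t • fderiv ℂ P (z + (t : ℂ) • c)) z := by
  obtain ⟨δ, hδ, C, hC⟩ := exists_forall_norm_fderiv_add_ofReal_smul_le hU hP hz
  have hcont : ∀ x ∈ ball z δ,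
      ContinuousOn (fun t : ℝ => g t • P (x + (t : ℂ) • c)) (uIcc a b) := fun x hx =>
    hg.continuousOn.smul (hP.continuousOn.comp (by fun_prop) fun t ht => (hC x hx t ht).1)
  refine intervalIntegral.hasFDerivAt_integral_of_dominated_of_fderiv_le
    (bound := fun t => ‖g t‖ * C) (F' := fun x t => g t • fderiv ℂ P (x + (t : ℂ) • c))
    (ball_mem_nhds z hδ) ?_ (hcont z (mem_ball_self hδ)).intervalIntegrable
    ((intervalIntegrable_fderiv_add_ofReal_smul hU hP hz).continuousOn_smul
      hg.continuousOn).def'.aestronglyMeasurable ?_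
    ((hg.norm.mul continuous_const).intervalIntegrable a b) ?_
  · filter_upwards [ball_mem_nhds z hδ] with x hx
    exact ((hcont x hx).mono uIoc_subset_uIcc).aestronglyMeasurable measurableSet_uIoc
  · refine Eventually.of_forall fun t ht x hx => ?_
    rw [norm_smul]
    exact mul_le_mul_of_nonneg_left (hC x hx t (uIoc_subset_uIcc ht)).2 (norm_nonneg _)
  · refine Eventually.of_forall fun t ht x hx => ?_
    have hPx :=
      (hP.differentiableAt (hU.mem_nhds (hC x hx t (uIoc_subset_uIcc ht)).1)).hasFDerivAt
    exact ((hPx.comp x ((hasFDerivAt_id x).add_const _)).const_smul (g t)).congr_fderiv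
      (by simp)

theorem fderiv_intervalIntegral_smul_sub_orbitAverage_apply (hU : IsOpen U)
    {c : E} (hUc : ∀ x ∈ U, ∀ t ∈ Icc (0 : ℝ) 1, x + (t : ℂ) • c ∈ U)
    (hP : DifferentiableOn ℂ P U) (hper : ∀ x, P (x + c) = P x) {z : E} (hz : z ∈ U) :
    fderiv ℂ (fun x => ∫ t in (0 : ℝ)..1,
        (t : ℂ) • (P (x + (t : ℂ) • c) - orbitAverage P c (x + (t : ℂ) • c))) z c =
      P z - orbitAverage P c z := by
  have hseg : ∀ x ∈ U, ∀ t ∈ uIcc (0 : ℝ) 1, x + (t : ℂ) • c ∈ U := by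
    simpa only [uIcc_of_le zero_le_one] using hUc
  have hW : (fun x => ∫ t in (0 : ℝ)..1,
        (t : ℂ) • (P (x + (t : ℂ) • c) - orbitAverage P c (x + (t : ℂ) • c))) =ᶠ[𝓝 z]
      fun x => ∫ t in (0 : ℝ)..1, ((t : ℂ) - 2⁻¹) • P (x + (t : ℂ) • c) := by
    filter_upwards [hU.mem_nhds hz] with x hx
    exact intervalIntegral_smul_sub_orbitAverage hper
      (hP.continuousOn.comp (by fun_prop) (hseg x hx)).intervalIntegrable
  have hD := intervalIntegrable_fderiv_add_ofReal_smul hU hP (hseg z hz)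
  rw [hW.fderiv_eq, (hasFDerivAt_intervalIntegral_smul_add_ofReal_smul hU hP (by fun_prop)
    (hseg z hz)).fderiv, ContinuousLinearMap.intervalIntegral_apply
    (hD.continuousOn_smul (by fun_prop))]
  simp only [smul_apply]
  rw [intervalIntegral.integral_smul_deriv_eq_deriv_smul (u := fun t : ℝ => (t : ℂ) - 2⁻¹)
    (u' := fun _ => 1) (fun t _ => by simpa using (hasDerivAt_id t).ofReal_comp.sub_const 2⁻¹)
    (fun t ht => (hP.differentiableAt (hU.mem_nhds (hseg z hz t ht))).hasDerivAt_add_ofReal_smul)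
    intervalIntegrable_const
    (intervalIntegrable_iff.2 (hD.def'.apply_continuousLinearMap c))]
  simp only [one_smul, Complex.ofReal_one, Complex.ofReal_zero, zero_smul, add_zero, hper]
  rw [← orbitAverage]
  module

end ConstantFlow

theorem isOpen_strip (n : ℕ) (s : ℝ) : IsOpen (strip n s) := by
  simp only [strip, ofPred_forall]
  exact isOpen_iInter_of_finite fun i => isOpen_lt (by fun_prop) continuous_const

theorem add_ofReal_smul_mem_strip {n : ℕ} {s : ℝ} {x : Fin n → ℂ} (hx : x ∈ strip n s)
    (c : Fin n → ℝ) (t : ℝ) : x + (t : ℂ) • (fun i => (c i : ℂ)) ∈ strip n s := fun i => by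
  simpa using hx i

theorem stmt_14_general (n : ℕ) (s : ℝ)
    (ω : Fin n → ℝ) (T : ℝ)
    (hperiod : ∀ i, ∃ m : ℤ, T * ω i = (m : ℝ))
    (P : (Fin n → ℂ) → (Fin n → ℂ))
    (hPd : DifferentiableOn ℂ P (strip n s))
    (hPper : ∀ z, ∀ m : Fin n → ℤ, P (z + fun i => (m i : ℂ)) = P z)
    (Pbar V : (Fin n → ℂ) → (Fin n → ℂ))
    (hPbar : ∀ z, Pbar z = ∫ t in (0:ℝ)..1, P (z + fun i => ((t * T * ω i : ℝ) : ℂ)))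
    (hV : ∀ z, V z = T • ∫ t in (0:ℝ)..1,
      t • (P (z + fun i => ((t * T * ω i : ℝ) : ℂ)) -
           Pbar (z + fun i => ((t * T * ω i : ℝ) : ℂ)))) :
    ∀ z ∈ strip n s, fderiv ℂ V z (fun i => ((ω i : ℝ) : ℂ)) = P z - Pbar z := by
  intro z hz
  set c : Fin n → ℂ := fun i => ((T * ω i : ℝ) : ℂ)
  have hflow : ∀ x (t : ℝ), (x + fun i => ((t * T * ω i : ℝ) : ℂ)) = x + (t : ℂ) • c :=
    fun x t => by ext i; simp [c, mul_assoc]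
  have hper : ∀ x, P (x + c) = P x := by
    choose m hm using hperiod
    simpa [c, hm] using fun x => hPper x m
  have hPbar' : Pbar = orbitAverage P c := funext fun x => by simp only [hPbar, hflow]; rfl
  have hV' : V = T • fun x => ∫ t in (0 : ℝ)..1,
      (t : ℂ) • (P (x + (t : ℂ) • c) - orbitAverage P c (x + (t : ℂ) • c)) := by
    ext x : 1
    simp only [hV, hflow, hPbar', Pi.smul_apply, Complex.coe_smul]
  have hTω : T • (fun i => ((ω i : ℝ) : ℂ)) = c := by ext i; simp [c]
  rw [hV', fderiv_const_smul_field, Pi.smul_apply, smul_apply,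
    ← ContinuousLinearMap.map_smul_of_tower, hTω,
    fderiv_intervalIntegral_smul_sub_orbitAverage_apply (isOpen_strip n s)
      (fun x hx t _ => add_ofReal_smul_mem_strip hx _ t) hPd hper hz, hPbar']

/-- for a T-periodic vector ω (Tω ∈ ℤⁿ) and a bounded analytic ℤⁿ-periodic
vector field P on 𝕋ⁿ_s, setting [P] = ∫₀¹ P∘X_{Tω}^t dt and
V = T∫₀¹ (P − [P])∘X_{Tω}^t · t dt (where X_{Tω}^t is translation by tTω), one has
[V, X_ω] = P − [P]; since X_ω is constant, [V, X_ω](z) = DV(z)·ω. -/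
theorem stmt_14 (n : ℕ) (s : ℝ) (hs : 0 < s)
    (ω : Fin n → ℝ) (hω : ω ≠ 0) (T : ℝ) (hT : 0 < T)
    (hperiod : ∀ i, ∃ m : ℤ, T * ω i = (m : ℝ))
    (P : (Fin n → ℂ) → (Fin n → ℂ))
    (hPd : DifferentiableOn ℂ P (strip n s))
    (hPb : ∃ M, ∀ z ∈ strip n s, ‖P z‖ ≤ M)
    (hPper : ∀ z, ∀ m : Fin n → ℤ, P (z + fun i => (m i : ℂ)) = P z)
    (Pbar V : (Fin n → ℂ) → (Fin n → ℂ))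
    (hPbar : ∀ z, Pbar z = ∫ t in (0:ℝ)..1, P (z + fun i => ((t * T * ω i : ℝ) : ℂ)))
    (hV : ∀ z, V z = T • ∫ t in (0:ℝ)..1,
      t • (P (z + fun i => ((t * T * ω i : ℝ) : ℂ)) -
           Pbar (z + fun i => ((t * T * ω i : ℝ) : ℂ)))) :
    ∀ z ∈ strip n s, fderiv ℂ V z (fun i => ((ω i : ℝ) : ℂ)) = P z - Pbar z :=
  stmt_14_general n s ω T hperiod P hPd hPper Pbar V hPbar hV
end

section
/- Cauchy estimate for Lie derivatives: let V be a bounded real-analytic vector field on 𝕋ⁿ_s, f a bounded real-analytic function on 𝕋ⁿ_s, and 0 < ς < s. Then the Lie derivative satisfies |ℒ_V f|_{s−ς} ≤ ς⁻¹ |V|_s |f|_s, where ℒ_V f = (d/dt)(f∘V^t)|_{t=0} and |·|_r denotes the sup norm on 𝕋ⁿ_r. -/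
open Metric Set

theorem closedBall_subset_strip {n : ℕ} {a r : ℝ} {z : Fin n → ℂ} (hz : z ∈ strip n a) :
    closedBall z r ⊆ strip n (a + r) := by
  intro w hw i
  have hwz : ‖w i - z i‖ ≤ r :=
    (norm_le_pi_norm (w - z) i).trans (by rwa [← dist_eq_norm])
  calc |(w i).im| = |(z i).im + (w i - z i).im| := by rw [Complex.sub_im, add_sub_cancel]
    _ ≤ |(z i).im| + ‖w i - z i‖ :=
      (abs_add_le _ _).trans (by gcongr; exact Complex.abs_im_le_norm _)
    _ < a + r := by linarith [hz i]

section CauchyEstimate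

variable {E F : Type*} [NormedAddCommGroup E] [NormedSpace ℂ E]
  [NormedAddCommGroup F] [NormedSpace ℂ F]

theorem norm_fderiv_apply_le_of_forall_mem_sphere_norm_le {f : E → F} {c : E} {r M : ℝ}
    (hr : 0 < r) (hf : DiffContOnCl ℂ f (ball c r)) (hM : ∀ w ∈ sphere c r, ‖f w‖ ≤ M) (v : E) :
    ‖fderiv ℂ f c v‖ ≤ M / r * ‖v‖ := by
  rcases eq_or_ne v 0 with rfl | hv0
  · simp
  have hv : 0 < ‖v‖ := norm_pos_iff.2 hv0
  set ℓ : ℂ → E := fun t => c + t • v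
  have hℓ : ∀ t, dist (ℓ t) c = ‖t‖ * ‖v‖ := fun t => by
    simp only [ℓ, dist_eq_norm, add_sub_cancel_left, norm_smul]
  have hmaps : MapsTo ℓ (ball 0 (r / ‖v‖)) (ball c r) := fun t ht => by
    rw [mem_ball_zero_iff, lt_div_iff₀ hv] at ht
    rwa [mem_ball, hℓ]
  have hsphere : ∀ t ∈ sphere (0 : ℂ) (r / ‖v‖), ‖(f ∘ ℓ) t‖ ≤ M := fun t ht => by
    rw [mem_sphere_zero_iff_norm, eq_div_iff hv.ne'] at ht
    exact hM _ (by rw [mem_sphere, hℓ, ht])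
  have hℓd : Differentiable ℂ ℓ := by fun_prop
  have hderiv : HasDerivAt (f ∘ ℓ) (fderiv ℂ f c v) 0 := by
    have hfc := (hf.differentiableAt isOpen_ball (mem_ball_self hr)).hasFDerivAt
    have hℓ0 : HasDerivAt ℓ v 0 := by
      simpa only [id, one_smul] using ((hasDerivAt_id (0 : ℂ)).smul_const v).const_add c
    exact hfc.comp_hasDerivAt_of_eq 0 hℓ0 (by simp [ℓ])
  calc ‖fderiv ℂ f c v‖ = ‖deriv (f ∘ ℓ) 0‖ := by rw [hderiv.deriv]
    _ ≤ M / (r / ‖v‖) :=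
      Complex.norm_deriv_le_of_forall_mem_sphere_norm_le (div_pos hr hv)
        (hf.comp hℓd.diffContOnCl hmaps) hsphere
    _ = M / r * ‖v‖ := by field_simp

end CauchyEstimate

theorem stmt_16_general (n : ℕ) (s ς : ℝ) (hς : 0 < ς)
    (V : (Fin n → ℂ) → (Fin n → ℂ)) (f : (Fin n → ℂ) → ℂ)
    (hfd : DifferentiableOn ℂ f (strip n s))
    (Mv Mf : ℝ)
    (hMv : ∀ z ∈ strip n s, ‖V z‖ ≤ Mv)
    (hMf : ∀ z ∈ strip n s, ‖f z‖ ≤ Mf) :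
    ∀ z ∈ strip n (s - ς), ‖fderiv ℂ f z (V z)‖ ≤ ς⁻¹ * Mv * Mf := by
  intro z hz
  have hball : closedBall z ς ⊆ strip n s := by
    simpa using closedBall_subset_strip (r := ς) hz
  have hzs : z ∈ strip n s := hball (mem_closedBall_self hς.le)
  have hMf0 : 0 ≤ Mf := (norm_nonneg _).trans (hMf z hzs)
  calc ‖fderiv ℂ f z (V z)‖ ≤ Mf / ς * ‖V z‖ :=
        norm_fderiv_apply_le_of_forall_mem_sphere_norm_le hς (hfd.diffContOnCl_ball hball)
          (fun w hw => hMf w (hball (sphere_subset_closedBall hw))) (V z)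
    _ ≤ Mf / ς * Mv := by gcongr; exact hMv z hzs
    _ = ς⁻¹ * Mv * Mf := by ring

/-- Cauchy estimate for Lie derivatives: if V is a bounded analytic
ℤⁿ-periodic vector field on 𝕋ⁿ_s with |V|_s ≤ Mv and f a bounded analytic ℤⁿ-periodic
function with |f|_s ≤ Mf, then for 0 < ς < s the Lie derivative
ℒ_V f (z) = (d/dt)(f∘V^t)|_{t=0}(z) = df(z)·V(z) satisfies |ℒ_V f|_{s−ς} ≤ ς⁻¹ Mv Mf. -/
theorem stmt_16 (n : ℕ) (s ς : ℝ) (hς : 0 < ς) (hςs : ς < s)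
    (V : (Fin n → ℂ) → (Fin n → ℂ)) (f : (Fin n → ℂ) → ℂ)
    (hVd : DifferentiableOn ℂ V (strip n s))
    (hfd : DifferentiableOn ℂ f (strip n s))
    (hVper : ∀ z, ∀ m : Fin n → ℤ, V (z + fun i => (m i : ℂ)) = V z)
    (hfper : ∀ z, ∀ m : Fin n → ℤ, f (z + fun i => (m i : ℂ)) = f z)
    (Mv Mf : ℝ)
    (hMv : ∀ z ∈ strip n s, ‖V z‖ ≤ Mv)
    (hMf : ∀ z ∈ strip n s, ‖f z‖ ≤ Mf) :
    ∀ z ∈ strip n (s - ς), ‖fderiv ℂ f z (V z)‖ ≤ ς⁻¹ * Mv * Mf :=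
  stmt_16_general n s ς hς V f hfd Mv Mf hMv hMf
end
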